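/- Let Σ₁, Σ₂ be positive definite d×d matrices and T = Σ₁^{-1/2} (Σ₁^{1/2} Σ₂ Σ₁^{1/2})^{1/2} Σ₁^{-1/2}. If X ∼ N(m₁, Σ₁), then E‖T X + t − X‖² = ‖m₂ − m₁‖² + Trace(Σ₁ + Σ₂ − 2 (Σ₁^{1/2} Σ₂ Σ₁^{1/2})^{1/2}), where t = m₂ − T m₁. That is, the affine optimal coupling attains the Gelbrich bound. -/

import Mathlib

open MeasureTheory Matrix Real

open Classical in
noncomputable def msqrt {d : ℕ} (A : Matrix (Fin d) (Fin d) ℝ) : Matrix (Fin d) (Fin d) ℝ :=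
  if h : A.PosSemidef then (h.1.eigenvectorUnitary : Matrix (Fin d) (Fin d) ℝ) *
    diagonal (Real.sqrt ∘ h.1.eigenvalues) * (star h.1.eigenvectorUnitary : Matrix (Fin d) (Fin d) ℝ)
    else 0

noncomputable def gaussianPdf {ι : Type*} [Fintype ι] [DecidableEq ι]
    (m : EuclideanSpace ℝ ι) (S : Matrix ι ι ℝ) (x : EuclideanSpace ℝ ι) : ℝ :=
  Real.sqrt (((2 * Real.pi) ^ (Fintype.card ι) * S.det)⁻¹) *
    Real.exp (-(1 / 2) * ∑ i, ∑ j, (x i - m i) * S⁻¹ i j * (x j - m j))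

noncomputable def gaussian {ι : Type*} [Fintype ι] [DecidableEq ι]
    (m : EuclideanSpace ℝ ι) (S : Matrix ι ι ℝ) : Measure (EuclideanSpace ℝ ι) :=
  volume.withDensity fun x => ENNReal.ofReal (gaussianPdf m S x)

noncomputable def KLdiv {ι : Type*} [Fintype ι]
    (α β : Measure (EuclideanSpace ℝ ι)) : ℝ :=
  (∫ x, Real.log ((α.rnDeriv β x).toReal) ∂α) - (β Set.univ).toReal + (α Set.univ).toReal


/-- The identity map regarding a plain vector as a point of Euclidean space. -/
noncomputable def toEuc {ι : Type*} [Fintype ι] (v : ι → ℝ) : EuclideanSpace ℝ ι :=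
  (WithLp.equiv 2 (ι → ℝ)).symm v

/-! The density-defined `gaussian m S` is Mathlib's `multivariateGaussian m S`: pushing the
standard Gaussian forward along `z ↦ m + S^{1/2} z` and changing variables turns its product
density into `gaussianPdf m S`, because `(S^{1/2} z)ᵀ S⁻¹ (S^{1/2} z) = ‖z‖²` and
`|det S^{1/2}| = (det S)^{1/2}`. With `A = T - 1` the integrand is `‖A (X - m₁) + (m₂ - m₁)‖²`,
whose mean is `‖m₂ - m₁‖² + tr (A Σ₁ Aᵀ)` by the covariance of `X`. Finally `T` is symmetric,
`T Σ₁ T = Σ₂` and `tr (T Σ₁) = tr (Σ₁^{1/2} Σ₂ Σ₁^{1/2})^{1/2}`, which turns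
`tr ((T - 1) Σ₁ (T - 1))` into the Gelbrich trace term. -/

open scoped MatrixOrder RealInnerProductSpace NNReal
open ProbabilityTheory

section msqrt
variable {n : ℕ} {A : Matrix (Fin n) (Fin n) ℝ}

lemma msqrt_eq_cfcSqrt (hA : A.PosSemidef) : msqrt A = CFC.sqrt A := by
  rw [CFC.sqrt_eq_cfc, cfc_nnreal_eq_real _ A, hA.1.cfc_eq, msqrt, dif_pos hA]
  simp only [IsHermitian.cfc, Unitary.conjStarAlgAut_apply]
  congr 3 with i
  simp [max_eq_left (hA.eigenvalues_nonneg i)]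

lemma msqrt_mul_msqrt (hA : A.PosSemidef) : msqrt A * msqrt A = A := by
  rw [msqrt_eq_cfcSqrt hA, CFC.sqrt_mul_sqrt_self A hA.nonneg]

lemma transpose_msqrt (hA : A.PosSemidef) : (msqrt A)ᵀ = msqrt A := by
  rw [msqrt_eq_cfcSqrt hA, ← conjTranspose_eq_transpose_of_trivial]
  exact (CFC.sqrt_nonneg A).isSelfAdjoint

lemma isUnit_det_msqrt (hA : A.PosDef) : IsUnit (msqrt A).det := by
  rw [msqrt_eq_cfcSqrt hA.posSemidef, ← isUnit_iff_isUnit_det]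
  exact (CFC.isUnit_sqrt_iff A hA.posSemidef.nonneg).2 hA.isUnit

lemma posSemidef_msqrt_mul_mul_msqrt (hA : A.PosSemidef) {B : Matrix (Fin n) (Fin n) ℝ}
    (hB : B.PosSemidef) : (msqrt A * B * msqrt A).PosSemidef := by
  rw [msqrt_eq_cfcSqrt hA]
  exact (conjugate_nonneg_of_nonneg hB.nonneg (CFC.sqrt_nonneg A)).posSemidef

end msqrt

section
variable {n : Type*} [Fintype n] [DecidableEq n] {R B S₁ S₂ T : Matrix n n ℝ}

lemma mul_mul_eq_of_mul_self_eq (hR : IsUnit R.det) (hRR : R * R = S₁) (hT : T = R⁻¹ * B * R⁻¹)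
    (hB : B * B = R * S₂ * R) : T * S₁ * T = S₂ := by
  rw [hT, ← hRR]
  calc R⁻¹ * B * R⁻¹ * (R * R) * (R⁻¹ * B * R⁻¹) = R⁻¹ * (B * B) * R⁻¹ := by
        simp only [Matrix.mul_assoc, nonsing_inv_mul_cancel_left _ _ hR,
          mul_nonsing_inv_cancel_left _ _ hR]
    _ = S₂ := by
        rw [hB]
        simp only [Matrix.mul_assoc, nonsing_inv_mul_cancel_left _ _ hR, mul_nonsing_inv _ hR,
          Matrix.mul_one]

lemma trace_mul_eq_of_mul_self_eq (hR : IsUnit R.det) (hRR : R * R = S₁)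
    (hT : T = R⁻¹ * B * R⁻¹) : (T * S₁).trace = B.trace := by
  rw [hT, ← hRR, Matrix.mul_assoc, Matrix.mul_assoc, nonsing_inv_mul_cancel_left _ _ hR,
    trace_mul_comm, Matrix.mul_assoc, mul_nonsing_inv _ hR, Matrix.mul_one]

lemma trace_sub_one_mul_mul_sub_one_transpose (hR : IsUnit R.det) (hRt : Rᵀ = R) (hBt : Bᵀ = B)
    (hRR : R * R = S₁) (hT : T = R⁻¹ * B * R⁻¹) (hB : B * B = R * S₂ * R) :
    ((T - 1) * S₁ * (T - 1)ᵀ).trace = (S₁ + S₂ - (2 : ℝ) • B).trace := by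
  have hTt : Tᵀ = T := by
    rw [hT, transpose_mul, transpose_mul, transpose_nonsing_inv, hRt, hBt, Matrix.mul_assoc]
  have hexpand : (T - 1) * S₁ * (T - 1) = T * S₁ * T - T * S₁ - S₁ * T + S₁ := by noncomm_ring
  rw [transpose_sub, transpose_one, hTt, hexpand, trace_add, trace_sub, trace_sub,
    trace_mul_comm S₁ T, mul_mul_eq_of_mul_self_eq hR hRR hT hB,
    trace_mul_eq_of_mul_self_eq hR hRR hT, trace_sub, trace_add, trace_smul, smul_eq_mul]
  ring

end

section
variable {ι : Type*} [Fintype ι]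

lemma pi_gaussianReal_eq_withDensity :
    Measure.pi (fun _ : ι ↦ gaussianReal 0 1)
      = volume.withDensity (fun x ↦ ∏ i, gaussianPDF 0 1 (x i)) := by
  refine Measure.pi_eq (μ := fun _ : ι ↦ gaussianReal 0 1) fun s hs ↦ ?_
  have hint (i : ι) : Integrable (gaussianPDFReal 0 1) (volume.restrict (s i)) :=
    (integrable_gaussianPDFReal 0 1).restrict
  rw [withDensity_apply _ (MeasurableSet.univ_pi hs), volume_pi, Measure.restrict_pi_pi]
  simp_rw [gaussianReal_apply 0 one_ne_zero, gaussianPDF,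
    ← ENNReal.ofReal_prod_of_nonneg fun i _ ↦ gaussianPDFReal_nonneg 0 1 _]
  rw [← ofReal_integral_eq_lintegral_ofReal (Integrable.fintype_prod hint)
      (ae_of_all _ fun x ↦ Finset.prod_nonneg fun i _ ↦ gaussianPDFReal_nonneg 0 1 _),
    integral_fintype_prod_eq_prod, ENNReal.ofReal_prod_of_nonneg
      fun i _ ↦ integral_nonneg fun x ↦ gaussianPDFReal_nonneg 0 1 _]
  congr 1 with i
  exact ofReal_integral_eq_lintegral_ofReal (hint i) (ae_of_all _ (gaussianPDFReal_nonneg 0 1))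

lemma stdGaussian_eq_withDensity :
    stdGaussian (EuclideanSpace ℝ ι)
      = volume.withDensity (fun x ↦ ∏ i, gaussianPDF 0 1 (x i)) := by
  ext s hs
  rw [← map_pi_eq_stdGaussian, pi_gaussianReal_eq_withDensity, Measure.map_apply (by fun_prop) hs,
    withDensity_apply _ (hs.preimage (by fun_prop)), withDensity_apply _ hs]
  exact (PiLp.volume_preserving_toLp ι).setLIntegral_comp_preimage hs
    (f := fun y : EuclideanSpace ℝ ι ↦ ∏ i, gaussianPDF 0 1 (y i)) (by fun_prop)

end

section
variable {ι : Type*} [Fintype ι] [DecidableEq ι]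

lemma abs_det_mul_gaussianPdf_add_mulVec {S R : Matrix ι ι ℝ} (hS : S.PosDef) (hR : R * Rᵀ = S)
    (m z : EuclideanSpace ℝ ι) :
    |R.det| * gaussianPdf m S (m + WithLp.toLp 2 (R *ᵥ z)) = ∏ i, gaussianPDFReal 0 1 (z i) := by
  have hdet : S.det = R.det ^ 2 := by rw [← hR, det_mul, det_transpose, sq]
  have hRu : IsUnit R.det := by
    rw [isUnit_iff_ne_zero, ← pow_ne_zero_iff two_ne_zero, ← hdet]
    exact hS.det_pos.ne'
  have hquad : ∑ i, ∑ j, (R *ᵥ z) i * S⁻¹ i j * (R *ᵥ z) j = ∑ i, z i ^ 2 := by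
    have hone : Rᵀ * (S⁻¹ * R) = 1 := by
      rw [← hR, Matrix.mul_inv_rev, Matrix.mul_assoc, nonsing_inv_mul _ hRu, Matrix.mul_one,
        mul_nonsing_inv _ ((det_transpose R).symm ▸ hRu)]
    calc ∑ i, ∑ j, (R *ᵥ z) i * S⁻¹ i j * (R *ᵥ z) j = R *ᵥ z ⬝ᵥ S⁻¹ *ᵥ (R *ᵥ z) := by
          simp [dotProduct, mulVec, Finset.mul_sum, mul_assoc]
      _ = z ⬝ᵥ z := by
          rw [mulVec_mulVec, dotProduct_mulVec, ← vecMul_transpose, vecMul_vecMul, hone, vecMul_one]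
      _ = ∑ i, z i ^ 2 := by simp [dotProduct, sq]
  have hnorm : √((2 * π) ^ Fintype.card ι * S.det) = √(2 * π) ^ Fintype.card ι * |R.det| := by
    have h2π : (√(2 * π) ^ Fintype.card ι) ^ 2 = (2 * π) ^ Fintype.card ι := by
      rw [← pow_mul, mul_comm (Fintype.card ι), pow_mul, Real.sq_sqrt (by positivity)]
    rw [hdet, ← h2π, ← sq_abs R.det, ← mul_pow, Real.sqrt_sq (by positivity)]
  have hexp : ∑ i, -z i ^ 2 / 2 = -(1 / 2) * ∑ i, z i ^ 2 := by
    rw [Finset.mul_sum]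
    exact Finset.sum_congr rfl fun i _ ↦ by ring
  simp only [gaussianPdf, gaussianPDFReal, PiLp.add_apply, add_sub_cancel_left, hquad,
    NNReal.coe_one, mul_one, sub_zero]
  rw [Finset.prod_mul_distrib, ← Real.exp_sum, hexp, Real.sqrt_inv, hnorm, Finset.prod_const,
    Finset.card_univ, inv_pow]
  field_simp [abs_ne_zero.2 hRu.ne_zero]

lemma Matrix.det_toEuclideanCLM (R : Matrix ι ι ℝ) : (toEuclideanCLM (𝕜 := ℝ) R).det = R.det := by
  rw [ContinuousLinearMap.det, coe_toEuclideanCLM_eq_toEuclideanLin,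
    toEuclideanLin_eq_toLin_orthonormal, LinearMap.det_toLin]

lemma gaussian_eq_multivariateGaussian {S : Matrix ι ι ℝ} (hS : S.PosDef) (m : EuclideanSpace ℝ ι) :
    gaussian m S = multivariateGaussian m S := by
  set R := CFC.sqrt S
  set L := toEuclideanCLM (𝕜 := ℝ) R
  have hRt : Rᵀ = R := by
    rw [← conjTranspose_eq_transpose_of_trivial]
    exact (CFC.sqrt_nonneg S).isSelfAdjoint
  have hR : R * Rᵀ = S := by
    rw [hRt]
    exact CFC.sqrt_mul_sqrt_self S hS.posSemidef.nonneg
  have hL : Function.Bijective L := ContinuousLinearMap.isUnit_iff_bijective.1 <|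
    ((CFC.isUnit_sqrt_iff S hS.posSemidef.nonneg).2 hS.isUnit).map _
  have hφ : Function.Bijective (fun z ↦ m + L z) := (Equiv.addLeft m).bijective.comp hL
  ext s hs
  have hpre : MeasurableSet ((fun z ↦ m + L z) ⁻¹' s) := hs.preimage (by fun_prop)
  rw [multivariateGaussian, Measure.map_apply (by fun_prop) hs, stdGaussian_eq_withDensity,
    withDensity_apply _ hpre, gaussian, withDensity_apply _ hs]
  conv_lhs => rw [← Set.image_preimage_eq s hφ.surjective]
  rw [lintegral_image_eq_lintegral_abs_det_fderiv_mul volume hpre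
    (fun z _ ↦ (L.hasFDerivAt.const_add m).hasFDerivWithinAt) hφ.injective.injOn]
  refine setLIntegral_congr_fun hpre fun z _ ↦ ?_
  have hLz : L z = WithLp.toLp 2 (R *ᵥ z) := toEuclideanCLM_toLp R z
  rw [← ENNReal.ofReal_mul (abs_nonneg _), det_toEuclideanCLM, hLz,
    abs_det_mul_gaussianPdf_add_mulVec hS hR,
    ENNReal.ofReal_prod_of_nonneg fun i _ ↦ gaussianPDFReal_nonneg 0 1 _]
  rfl

end

section
variable {ι κ : Type*} [Fintype ι] [DecidableEq ι] [Fintype κ]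
  {μ : EuclideanSpace ℝ ι} {S : Matrix ι ι ℝ}

lemma memLp_two_inner_sub_add_multivariateGaussian (a : EuclideanSpace ℝ ι) (c : ℝ) :
    MemLp (fun x ↦ ⟪a, x - μ⟫ + c) 2 (multivariateGaussian μ S) := by
  simp_rw [inner_sub_right, sub_add_eq_add_sub, add_sub_assoc]
  exact ((innerSL ℝ a).comp_memLp' IsGaussian.memLp_two_id).add (memLp_const _)

lemma integral_sq_inner_sub_add_multivariateGaussian (hS : S.PosSemidef)
    (a : EuclideanSpace ℝ ι) (c : ℝ) :
    ∫ x, (⟪a, x - μ⟫ + c) ^ 2 ∂multivariateGaussian μ S = a ⬝ᵥ S *ᵥ a + c ^ 2 := by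
  have hinner : MemLp (fun x ↦ ⟪a, x⟫) 2 (multivariateGaussian μ S) :=
    (innerSL ℝ a).comp_memLp' IsGaussian.memLp_two_id
  have hshift : (fun x ↦ ⟪a, x - μ⟫ + c) = fun x ↦ ⟪a, x⟫ + (c - ⟪a, μ⟫) := by
    ext x
    rw [inner_sub_right]
    ring
  have hvar : Var[fun x ↦ ⟪a, x - μ⟫ + c; multivariateGaussian μ S] = a ⬝ᵥ S *ᵥ a := by
    rw [hshift, variance_add_const hinner.aestronglyMeasurable,
      ← covarianceBilin_self IsGaussian.memLp_two_id, covarianceBilin_multivariateGaussian hS]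
  have hmean : ∫ x, ⟪a, x - μ⟫ + c ∂multivariateGaussian μ S = c := by
    rw [hshift, integral_add (hinner.integrable one_le_two) (integrable_const _),
      integral_inner IsGaussian.integrable_fun_id, integral_id_multivariateGaussian]
    simp
  have := variance_eq_sub (memLp_two_inner_sub_add_multivariateGaussian (μ := μ) (S := S) a c)
  simp only [hvar, hmean, Pi.pow_apply] at this
  linarith

lemma integral_norm_sq_multivariateGaussian (hS : S.PosSemidef) (A : Matrix κ ι ℝ)
    (c : EuclideanSpace ℝ κ) :
    ∫ x, ‖WithLp.toLp 2 (A *ᵥ WithLp.ofLp (x - μ)) + c‖ ^ 2 ∂multivariateGaussian μ S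
      = (A * S * Aᵀ).trace + ‖c‖ ^ 2 := by
  have hcoord (x : EuclideanSpace ℝ ι) (i : κ) :
      (WithLp.toLp 2 (A *ᵥ WithLp.ofLp (x - μ)) + c) i = ⟪WithLp.toLp 2 (A i), x - μ⟫ + c i := by
    simp [mulVec, dotProduct, PiLp.inner_apply, mul_comm]
  simp_rw [EuclideanSpace.real_norm_sq_eq, hcoord]
  rw [integral_finsetSum _ fun i _ ↦
    (memLp_two_inner_sub_add_multivariateGaussian _ _).integrable_sq]
  simp_rw [integral_sq_inner_sub_add_multivariateGaussian hS, Finset.sum_add_distrib]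
  congr 1
  simp only [trace, diag, mul_apply, transpose_apply, dotProduct, mulVec, Finset.mul_sum,
    Finset.sum_mul]
  refine Finset.sum_congr rfl fun i _ ↦ ?_
  rw [Finset.sum_comm]
  simp only [mul_comm, mul_left_comm]

end

/-- The affine optimal coupling attains the Gelbrich bound:
`E‖T X + t − X‖² = ‖m₂ − m₁‖² + Tr(Σ₁ + Σ₂ − 2(Σ₁^{1/2} Σ₂ Σ₁^{1/2})^{1/2})`. -/
theorem affine_coupling_attains_gelbrich {d : ℕ}
    (S₁ S₂ : Matrix (Fin d) (Fin d) ℝ)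
    (hS₁ : S₁.PosDef) (hS₂ : S₂.PosDef)
    (m₁ m₂ : EuclideanSpace ℝ (Fin d))
    (T : Matrix (Fin d) (Fin d) ℝ)
    (hT : T = (msqrt S₁)⁻¹ * msqrt (msqrt S₁ * S₂ * msqrt S₁) * (msqrt S₁)⁻¹)
    (t : EuclideanSpace ℝ (Fin d))
    (ht : t = m₂ - toEuc (T.mulVec m₁)) :
    ∫ x, ‖toEuc (T.mulVec x) + t - x‖ ^ 2 ∂(gaussian m₁ S₁)
      = ‖m₂ - m₁‖ ^ 2 +
        (S₁ + S₂ - (2 : ℝ) • msqrt (msqrt S₁ * S₂ * msqrt S₁)).trace := by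
  have hcentered (x : EuclideanSpace ℝ (Fin d)) :
      toEuc (T *ᵥ x) + t - x = WithLp.toLp 2 ((T - 1) *ᵥ (x - m₁)) + (m₂ - m₁) := by
    simp only [toEuc, WithLp.equiv_symm_apply, ht, WithLp.ofLp_sub, mulVec_sub, sub_mulVec,
      one_mulVec, WithLp.toLp_sub, WithLp.toLp_ofLp]
    abel
  have hB := posSemidef_msqrt_mul_mul_msqrt hS₁.posSemidef hS₂.posSemidef
  simp_rw [hcentered]
  rw [gaussian_eq_multivariateGaussian hS₁, integral_norm_sq_multivariateGaussian hS₁.posSemidef,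
    trace_sub_one_mul_mul_sub_one_transpose (isUnit_det_msqrt hS₁) (transpose_msqrt hS₁.posSemidef)
      (transpose_msqrt hB) (msqrt_mul_msqrt hS₁.posSemidef) hT (msqrt_mul_msqrt hB), add_comm]
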